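/- Let A generate a C0-semigroup T on a separable Hilbert space H and let C be a bounded operator from D(A) (with graph norm) to a separable Hilbert space Y. If C is S-admissible for A (i.e., the output map Ψ_T : x ↦ (t ↦ C_Λ T(t)x) extends to a Hilbert–Schmidt operator from H to L²(0,T;Y)) and the semigroup T is exponentially stable, then ∫₀^∞ ‖C_Λ T(t)‖²_{HS} dt < ∞. -/

import Mathlib

open MeasureTheory Filter Set Topology ENNReal

/-- Squared Hilbert–Schmidt norm with respect to a Hilbert basis of `H`. -/
noncomputable def hsNormSq {H X : Type*} [NormedAddCommGroup H] [InnerProductSpace ℝ H]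
    [NormedAddCommGroup X] (e : HilbertBasis ℕ ℝ H) (f : H → X) : ℝ≥0∞ :=
  ∑' k, (‖f (e k)‖₊ : ℝ≥0∞) ^ 2

/-- The Yosida extension `C_Λ x = lim_{μ→∞} C μ R(μ,A) x`, as a total function. -/
noncomputable def yosidaExt {H Y : Type*} [NormedAddCommGroup H] [InnerProductSpace ℝ H]
    [NormedAddCommGroup Y] [NormedSpace ℝ Y]
    (DA : Submodule ℝ H) (C : DA →ₗ[ℝ] Y) (R : ℝ → H →L[ℝ] H) (ω : ℝ)
    (hmem : ∀ μ : ℝ, ω < μ → ∀ x : H, R μ x ∈ DA) : H → Y := fun x =>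
  haveI : Nonempty Y := ⟨0⟩
  limUnder atTop (fun μ : ℝ =>
    if h : ω < μ then C ⟨μ • R μ x, DA.smul_mem μ (hmem μ h x)⟩ else 0)

/-!
Cut `(0, ∞)` into the windows `(n T₀, (n + 1) T₀]`. By the semigroup law the integral over the
`n`-th window is `‖Ψ T(n T₀)‖²_HS`, and the Hilbert–Schmidt ideal property bounds this by
`‖T(n T₀)‖² ‖Ψ‖²_HS`; exponential stability makes `∑ₙ ‖T(n T₀)‖²` a convergent geometric series.
The ideal property `‖Ψ B‖_HS ≤ ‖B‖ ‖Ψ‖_HS` comes from computing Hilbert–Schmidt norms through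
the adjoint, `‖Φ‖_HS = ‖Φ†‖_HS`.
-/

open scoped InnerProduct

section HilbertSchmidt

variable {ι κ H G W : Type*} [NormedAddCommGroup H] [InnerProductSpace ℝ H]
  [NormedAddCommGroup G] [InnerProductSpace ℝ G] [NormedAddCommGroup W] [InnerProductSpace ℝ W]

theorem HilbertBasis.tsum_enorm_inner_sq (b : HilbertBasis ι ℝ H) (x : H) :
    ∑' i, ‖inner ℝ (b i) x‖ₑ ^ 2 = ‖x‖ₑ ^ 2 := by
  have h : HasSum (fun i => inner ℝ (b i) x ^ 2) (‖x‖ ^ 2) := by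
    simpa [real_inner_comm (b _) x, real_inner_self_eq_norm_sq, sq] using
      b.hasSum_inner_mul_inner x x
  simp_rw [← ofReal_norm, ← ENNReal.ofReal_pow (norm_nonneg _), Real.norm_eq_abs, sq_abs]
  rw [← ENNReal.ofReal_tsum_of_nonneg (fun i => sq_nonneg _) h.summable, h.tsum_eq]

theorem ContinuousLinearMap.tsum_enorm_apply_sq_eq_adjoint [CompleteSpace H] [CompleteSpace W]
    (e : HilbertBasis ι ℝ H) (f : HilbertBasis κ ℝ W) (Φ : H →L[ℝ] W) :
    ∑' i, ‖Φ (e i)‖ₑ ^ 2 = ∑' j, ‖(Φ†) (f j)‖ₑ ^ 2 := by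
  calc ∑' i, ‖Φ (e i)‖ₑ ^ 2 = ∑' i, ∑' j, ‖inner ℝ (f j) (Φ (e i))‖ₑ ^ 2 := by
        simp only [f.tsum_enorm_inner_sq]
    _ = ∑' j, ∑' i, ‖inner ℝ (e i) ((Φ†) (f j))‖ₑ ^ 2 := by
        rw [ENNReal.tsum_comm]
        simp only [adjoint_inner_right, real_inner_comm]
    _ = ∑' j, ‖(Φ†) (f j)‖ₑ ^ 2 := by
        simp only [e.tsum_enorm_inner_sq]

theorem ContinuousLinearMap.tsum_enorm_comp_apply_sq_le [CompleteSpace H] [CompleteSpace G]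
    [CompleteSpace W] (e : HilbertBasis ι ℝ H) (e' : HilbertBasis κ ℝ G) (Ψ : G →L[ℝ] W)
    (B : H →L[ℝ] G) :
    ∑' i, ‖Ψ (B (e i))‖ₑ ^ 2 ≤ ‖B‖ₑ ^ 2 * ∑' k, ‖Ψ (e' k)‖ₑ ^ 2 := by
  obtain ⟨w, f, -⟩ := exists_hilbertBasis ℝ W
  have adjoint_comp_le (y : W) : ‖((Ψ ∘L B)†) y‖ₑ ≤ ‖B‖ₑ * ‖(Ψ†) y‖ₑ := by
    rw [adjoint_comp, comp_apply, ← adjoint.enorm_map B]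
    exact le_opENorm _ _
  calc ∑' i, ‖Ψ (B (e i))‖ₑ ^ 2 = ∑' j, ‖((Ψ ∘L B)†) (f j)‖ₑ ^ 2 :=
        (Ψ ∘L B).tsum_enorm_apply_sq_eq_adjoint e f
    _ ≤ ∑' j, ‖B‖ₑ ^ 2 * ‖(Ψ†) (f j)‖ₑ ^ 2 :=
        ENNReal.tsum_le_tsum fun j => by grw [adjoint_comp_le, mul_pow]
    _ = ‖B‖ₑ ^ 2 * ∑' k, ‖Ψ (e' k)‖ₑ ^ 2 := by
        rw [ENNReal.tsum_mul_left, Ψ.tsum_enorm_apply_sq_eq_adjoint e' f]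

end HilbertSchmidt

theorem MeasureTheory.Lp.lintegral_enorm_sq_eq_of_ae_eq {α Y : Type*} [MeasurableSpace α]
    {μ : Measure α} [NormedAddCommGroup Y] (g : Lp Y 2 μ) {f : α → Y} (hgf : ∀ᵐ t ∂μ, g t = f t) :
    ∫⁻ t, ‖f t‖ₑ ^ 2 ∂μ = ‖g‖ₑ ^ 2 := by
  have h := eLpNorm_nnreal_pow_eq_lintegral (f := g) (μ := μ) (p := 2) two_ne_zero
  simp only [NNReal.coe_ofNat, ENNReal.rpow_two, ENNReal.coe_ofNat] at h
  rw [Lp.enorm_def, h]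
  exact lintegral_congr_ae (hgf.mono fun t ht => by simp only [ht])

theorem setLIntegral_Ioc_add_right (f : ℝ → ℝ≥0∞) (a b c : ℝ) :
    ∫⁻ t in Ioc (a + c) (b + c), f t = ∫⁻ s in Ioc a b, f (s + c) := by
  rw [← image_add_const_Ioc, (measurePreserving_add_right volume c).setLIntegral_comp_emb
    (measurableEmbedding_addRight c)]

theorem Ioi_zero_subset_iUnion_Ioc_nat_mul {τ : ℝ} (hτ : 0 < τ) :
    Ioi 0 ⊆ ⋃ n : ℕ, Ioc (n * τ) (n * τ + τ) := by
  intro t (ht : 0 < t)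
  obtain ⟨n, hn⟩ := Nat.exists_eq_add_one_of_ne_zero (Nat.ceil_pos.mpr (div_pos ht hτ)).ne'
  have hlt : (n : ℝ) < t / τ := by
    have := Nat.ceil_lt_add_one (div_pos ht hτ).le
    rw [hn, Nat.cast_add_one] at this
    linarith
  have hle : t / τ ≤ n + 1 := by exact_mod_cast hn ▸ Nat.le_ceil (t / τ)
  refine mem_iUnion.mpr ⟨n, ?_, ?_⟩
  · exact (lt_div_iff₀ hτ).mp hlt
  · rw [← add_one_mul]; exact (div_le_iff₀ hτ).mp hle

theorem tsum_enorm_sq_lt_top_of_norm_le_geometric {E : Type*} [SeminormedAddCommGroup E]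
    {a : ℕ → E} {M r : ℝ} (hr₀ : 0 ≤ r) (hr₁ : r < 1) (ha : ∀ n, ‖a n‖ ≤ M * r ^ n) :
    ∑' n, ‖a n‖ₑ ^ 2 < ⊤ := by
  have hle (n : ℕ) : ‖a n‖ₑ ^ 2 ≤ ENNReal.ofReal M ^ 2 * (ENNReal.ofReal r ^ 2) ^ n := by
    rw [← pow_mul, mul_comm 2, pow_mul, ← mul_pow, ← ENNReal.ofReal_pow hr₀,
      ← ENNReal.ofReal_mul' (pow_nonneg hr₀ n), ← ofReal_norm]
    gcongr
    exact ha n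
  refine (ENNReal.tsum_le_tsum hle).trans_lt ?_
  rw [ENNReal.tsum_mul_left]
  refine ENNReal.mul_lt_top (by simp) (tsum_geometric_lt_top.mpr ?_)
  simpa [sq] using ENNReal.ofReal_lt_one.mpr hr₁

theorem setLIntegral_Ioc_hsNormSq_comp_eq {H Y : Type*} [NormedAddCommGroup H]
    [InnerProductSpace ℝ H] [NormedAddCommGroup Y] [NormedSpace ℝ Y]
    (e : HilbertBasis ℕ ℝ H) (Φ : H → Y)
    (T : ℝ → H →L[ℝ] H) (hTsg : ∀ s t : ℝ, 0 ≤ s → 0 ≤ t → T (s + t) = (T s).comp (T t))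
    {τ : ℝ} (Ψ : H →L[ℝ] Lp Y 2 (volume.restrict (Ioc (0:ℝ) τ)))
    (hΨ : ∀ x : H, ∀ᵐ t ∂(volume.restrict (Ioc (0:ℝ) τ)), Ψ x t = Φ (T t x))
    {a : ℝ} (ha : 0 ≤ a) :
    ∫⁻ t in Ioc a (a + τ), hsNormSq e (fun x => Φ (T t x)) = hsNormSq e (fun x => Ψ (T a x)) := by
  have hmeas (x : H) :
      AEMeasurable (fun t => ‖Φ (T t x)‖ₑ ^ 2) (volume.restrict (Ioc (0:ℝ) τ)) :=
    ((Lp.aestronglyMeasurable (Ψ x)).congr (hΨ x)).enorm.pow_const 2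
  calc ∫⁻ t in Ioc a (a + τ), hsNormSq e (fun x => Φ (T t x))
      = ∫⁻ s in Ioc 0 τ, hsNormSq e (fun x => Φ (T (s + a) x)) := by
        rw [← setLIntegral_Ioc_add_right (fun t => hsNormSq e (fun x => Φ (T t x))), zero_add,
          add_comm τ]
    _ = ∫⁻ s in Ioc 0 τ, ∑' k, ‖Φ (T s (T a (e k)))‖ₑ ^ 2 :=
        setLIntegral_congr_fun measurableSet_Ioc fun s hs => by
          simp only [hsNormSq, hTsg s a hs.1.le ha, ContinuousLinearMap.comp_apply, enorm_eq_nnnorm]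
    _ = hsNormSq e (fun x => Ψ (T a x)) := by
        rw [lintegral_tsum fun k => hmeas _]
        exact tsum_congr fun k => Lp.lintegral_enorm_sq_eq_of_ae_eq _ (hΨ _)

theorem lintegral_hsNormSq_yosida_lt_top_of_S_admissible_of_expStable_general
    {H Y : Type*} [NormedAddCommGroup H] [InnerProductSpace ℝ H] [CompleteSpace H]
    [NormedAddCommGroup Y] [InnerProductSpace ℝ Y] [CompleteSpace Y]
    (e : HilbertBasis ℕ ℝ H)
    (T : ℝ → H →L[ℝ] H)
    (hTsg : ∀ s t : ℝ, 0 ≤ s → 0 ≤ t → T (s + t) = (T s).comp (T t))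
    (DA : Submodule ℝ H)
    (C : DA →ₗ[ℝ] Y)
    (ω : ℝ) (R : ℝ → H →L[ℝ] H)
    (hmem : ∀ μ : ℝ, ω < μ → ∀ x : H, R μ x ∈ DA)
    -- `S`-admissibility of `C` for `A`:
    (hSadm : ∃ T0 : ℝ, 0 < T0 ∧ ∃ Ψ : H →L[ℝ] Lp Y 2 (volume.restrict (Ioc (0:ℝ) T0)),
        hsNormSq e ⇑Ψ < ⊤ ∧
        ∀ x : H, ∀ᵐ t ∂(volume.restrict (Ioc (0:ℝ) T0)),
          (Ψ x : ℝ →ₘ[volume.restrict (Ioc (0:ℝ) T0)] Y) t = yosidaExt DA C R ω hmem (T t x))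
    -- exponential stability of `T`:
    (hstab : ∃ M ε : ℝ, 1 ≤ M ∧ 0 < ε ∧ ∀ t : ℝ, 0 ≤ t → ‖T t‖ ≤ M * Real.exp (-ε * t)) :
    (∫⁻ t in Ioi (0:ℝ), hsNormSq e (fun x => yosidaExt DA C R ω hmem (T t x))) < ⊤ := by
  obtain ⟨T0, hT0, Ψ, hΨ, hΨT⟩ := hSadm
  obtain ⟨M, ε, -, hε, hT⟩ := hstab
  set F := fun t => hsNormSq e (fun x => yosidaExt DA C R ω hmem (T t x))
  have hgeom (n : ℕ) : ‖T (n * T0)‖ ≤ M * Real.exp (-ε * T0) ^ n := by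
    rw [← Real.exp_nat_mul, show (n : ℝ) * (-ε * T0) = -ε * (n * T0) by ring]
    exact hT _ (by positivity)
  calc ∫⁻ t in Ioi 0, F t ≤ ∫⁻ t in ⋃ n : ℕ, Ioc (n * T0) (n * T0 + T0), F t :=
        lintegral_mono_set (Ioi_zero_subset_iUnion_Ioc_nat_mul hT0)
    _ ≤ ∑' n : ℕ, ∫⁻ t in Ioc (n * T0) (n * T0 + T0), F t := lintegral_iUnion_le _ _
    _ = ∑' n : ℕ, hsNormSq e (fun x => Ψ (T (n * T0) x)) :=
        tsum_congr fun n => setLIntegral_Ioc_hsNormSq_comp_eq e _ T hTsg Ψ hΨT (by positivity)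
    _ ≤ ∑' n : ℕ, ‖T (n * T0)‖ₑ ^ 2 * hsNormSq e Ψ :=
        ENNReal.tsum_le_tsum fun n => Ψ.tsum_enorm_comp_apply_sq_le e e _
    _ = (∑' n : ℕ, ‖T (n * T0)‖ₑ ^ 2) * hsNormSq e Ψ := ENNReal.tsum_mul_right
    _ < ⊤ := ENNReal.mul_lt_top (tsum_enorm_sq_lt_top_of_norm_le_geometric (Real.exp_pos _).le
        (Real.exp_lt_one_iff.mpr (by nlinarith)) hgeom) hΨ

/-- Let `A` generate a C0-semigroup `T` on a separable Hilbert space `H` and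
let `C ∈ L(D(A),Y)`.  If `C` is `S`-admissible for `A` (the output map
`Ψ_T : x ↦ (t ↦ C_Λ T(t)x)` extends to a Hilbert–Schmidt operator `H → L²(0,T;Y)`) and `T` is
exponentially stable, then `∫₀^∞ ‖C_Λ T(t)‖²_HS dt < ∞`. -/
theorem lintegral_hsNormSq_yosida_lt_top_of_S_admissible_of_expStable
    {H Y : Type*} [NormedAddCommGroup H] [InnerProductSpace ℝ H] [CompleteSpace H]
    [NormedAddCommGroup Y] [InnerProductSpace ℝ Y] [CompleteSpace Y]
    (e : HilbertBasis ℕ ℝ H)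
    (T : ℝ → H →L[ℝ] H)
    (hT0 : T 0 = 1)
    (hTsg : ∀ s t : ℝ, 0 ≤ s → 0 ≤ t → T (s + t) = (T s).comp (T t))
    (hTcont : ∀ x : H, ContinuousOn (fun t => T t x) (Ici (0:ℝ)))
    (DA : Submodule ℝ H) (Agen : DA →ₗ[ℝ] H)
    (hgen : ∀ x : DA, Tendsto (fun t : ℝ => t⁻¹ • (T t x - (x : H))) (𝓝[>] 0) (𝓝 (Agen x)))
    (C : DA →ₗ[ℝ] Y)
    (hCbd : ∃ c : ℝ, ∀ x : DA, ‖C x‖ ≤ c * (‖(x : H)‖ + ‖Agen x‖))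
    (ω : ℝ) (R : ℝ → H →L[ℝ] H)
    (hmem : ∀ μ : ℝ, ω < μ → ∀ x : H, R μ x ∈ DA)
    (hres : ∀ (μ : ℝ) (hμ : ω < μ) (x : H), μ • R μ x - Agen ⟨R μ x, hmem μ hμ x⟩ = x)
    (hres2 : ∀ μ : ℝ, ω < μ → ∀ x : DA, R μ (μ • (x : H) - Agen x) = (x : H))
    -- `S`-admissibility of `C` for `A`:
    (hSadm : ∃ T0 : ℝ, 0 < T0 ∧ ∃ Ψ : H →L[ℝ] Lp Y 2 (volume.restrict (Ioc (0:ℝ) T0)),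
        hsNormSq e ⇑Ψ < ⊤ ∧
        ∀ x : H, ∀ᵐ t ∂(volume.restrict (Ioc (0:ℝ) T0)),
          (Ψ x : ℝ →ₘ[volume.restrict (Ioc (0:ℝ) T0)] Y) t = yosidaExt DA C R ω hmem (T t x))
    -- exponential stability of `T`:
    (hstab : ∃ M ε : ℝ, 1 ≤ M ∧ 0 < ε ∧ ∀ t : ℝ, 0 ≤ t → ‖T t‖ ≤ M * Real.exp (-ε * t)) :
    (∫⁻ t in Ioi (0:ℝ), hsNormSq e (fun x => yosidaExt DA C R ω hmem (T t x))) < ⊤ :=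
  lintegral_hsNormSq_yosida_lt_top_of_S_admissible_of_expStable_general e T hTsg DA C ω R hmem hSadm
    hstab
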